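/- arXiv:1703.03849 — 3 statements merged into one kernel-verified Lean document; each statement's English description precedes it below -/
import Mathlib

section
/- Let H = (V, E) be a hypergraph and e' ∈ E an edge. For every edge e ∈ E with e ≠ e' that is not removed by the contraction, the corresponding edge f of e in the contracted hypergraph H/e' satisfies γ_{H/e'}(f) ≥ γ_H(e); that is, contracting an edge does not decrease the strength of any remaining edge. -/
/- A hypergraph on a finite vertex type `V` is given by a multiset `E` of edges,
each edge a `Finset V` (with at least 2 vertices, stated as a hypothesis). -/

variable {V : Type*} [Fintype V] [DecidableEq V]

/-- `δ_H(A)`: the (multiset of) edges of `E` crossing the cut `A`. -/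
def cutEdges (E : Multiset (Finset V)) (A : Finset V) : Multiset (Finset V) :=
  E.filter (fun e => (e ∩ A).Nonempty ∧ (e \ A).Nonempty)

/-- Edge multiset of the subhypergraph `H[U]` induced on `U`. -/
def induced (E : Multiset (Finset V)) (U : Finset V) : Multiset (Finset V) :=
  E.filter (fun e => e ⊆ U)

/-- Edge-connectivity `λ(H[U])`: the minimum number of edges of `H[U]` crossing a
nonempty proper subset `A ⊊ U`. -/
noncomputable def lam (E : Multiset (Finset V)) (U : Finset V) : ℕ :=
  sInf {k : ℕ | ∃ A : Finset V, A ⊆ U ∧ A.Nonempty ∧ A ≠ U ∧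
    k = Multiset.card (cutEdges (induced E U) A)}

/-- Strength `γ_H(e)`: the maximum of `λ(H[U])` over all `U` with `e ⊆ U ⊆ V`. -/
noncomputable def strength (E : Multiset (Finset V)) (e : Finset V) : ℕ :=
  (Finset.univ.powerset.filter (fun U => e ⊆ U)).sup (lam E)

/-- The graph on `V` joining two distinct vertices that lie in a common edge of `E`;
its connectivity notions are those of the hypergraph. -/
def toGraph (E : Multiset (Finset V)) : SimpleGraph V where
  Adj u v := u ≠ v ∧ ∃ e ∈ E, u ∈ e ∧ v ∈ e
  symm := ⟨by rintro u v ⟨h, e, he, hu, hv⟩; exact ⟨h.symm, e, he, hv, hu⟩⟩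
  loopless := ⟨by rintro v ⟨h, -⟩; exact h rfl⟩

/-- `κ(H)`: the number of connected components of the hypergraph. -/
noncomputable def kappa (E : Multiset (Finset V)) : ℕ :=
  Nat.card (toGraph E).ConnectedComponent

/-- The vertex map contracting the edge `e'` to its representative vertex `v0 ∈ e'`. -/
def contractMap (e' : Finset V) (v0 : V) : V → V := fun u => if u ∈ e' then v0 else u

/-- The hypergraph `H/e'` obtained by contracting the edge `e'` (to the representative
vertex `v0 ∈ e'`): edges contained in `e'` are removed, all other edges are replaced by
their image under the contraction. -/
def contract (E : Multiset (Finset V)) (e' : Finset V) (v0 : V) : Multiset (Finset V) :=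
  (E.filter (fun f => ¬ f ⊆ e')).map (fun f => f.image (contractMap e' v0))

/-- The degree of a vertex: the number of edges (with multiplicity) containing it. -/
def degree (E : Multiset (Finset V)) (v : V) : ℕ :=
  Multiset.card (E.filter (fun e => v ∈ e))

/-! Write `φ` for `contractMap e' v0`. For `U ⊇ e`, the set `φ U` contains `φ e`, and a
cut `A` of `(H/e')[φ U]` pulls back to the cut `U ∩ φ⁻¹(A)` of `H[U]`. Every edge crossing the
pulled-back cut is an edge of `H/e'` whose image crosses `A`: an edge inside `e'` is collapsed
onto `v0` and so crosses no pulled-back cut. Hence `λ(H[U]) ≤ λ((H/e')[φ U])`, as long as `φ U`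
has two vertices, which holds because `e` has two vertices, one of them outside `e'`. -/

section Contraction

variable {α : Type*} [DecidableEq α] {E : Multiset (Finset α)} {e' U A : Finset α} {v0 u : α}

theorem contractMap_of_mem (hu : u ∈ e') : contractMap e' v0 u = v0 := if_pos hu

theorem contractMap_of_notMem (hu : u ∉ e') : contractMap e' v0 u = u := if_neg hu

theorem eq_of_contractMap_eq_of_notMem (hv0 : v0 ∈ e') (hu : u ∉ e') {a : α}
    (h : contractMap e' v0 a = u) : a = u := by
  by_cases ha : a ∈ e'
  · rw [contractMap_of_mem ha] at h
    exact absurd (h ▸ hv0) hu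
  · rwa [contractMap_of_notMem ha] at h

theorem image_contractMap_nontrivial {e : Finset α} (he : 2 ≤ e.card) (hv0 : v0 ∈ e')
    (hkeep : ¬ e ⊆ e') : (e.image (contractMap e' v0)).Nontrivial := by
  obtain ⟨u, hue, hue'⟩ := Finset.not_subset.mp hkeep
  obtain ⟨a, hae, hau⟩ := Finset.exists_mem_ne (by omega : 1 < e.card) u
  refine ⟨u, ?_, contractMap e' v0 a, Finset.mem_image_of_mem _ hae,
    fun h => hau (eq_of_contractMap_eq_of_notMem hv0 hue' h.symm)⟩
  exact contractMap_of_notMem (v0 := v0) hue' ▸ Finset.mem_image_of_mem _ hue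

theorem lam_le_card_cutEdges (hAU : A ⊆ U) (hA : A.Nonempty) (hAU' : A ≠ U) :
    lam E U ≤ Multiset.card (cutEdges (induced E U) A) :=
  Nat.sInf_le ⟨A, hAU, hA, hAU', rfl⟩

theorem le_lam {k : ℕ} (hU : U.Nontrivial)
    (h : ∀ A ⊆ U, A.Nonempty → A ≠ U → k ≤ Multiset.card (cutEdges (induced E U) A)) :
    k ≤ lam E U := by
  obtain ⟨x, hx, y, hy, hxy⟩ := hU
  have hxU : ({x} : Finset α) ≠ U := fun h => hxy (Finset.mem_singleton.mp (h ▸ hy)).symm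
  refine le_csInf ⟨_, {x}, Finset.singleton_subset_iff.mpr hx, Finset.singleton_nonempty x,
    hxU, rfl⟩ ?_
  rintro _ ⟨A, hAU, hA, hAU', rfl⟩
  exact h A hAU hA hAU'

theorem image_mem_cutEdges_contract {f : Finset α} (hfU : f ⊆ U)
    (hf : (f ∩ U.filter (contractMap e' v0 · ∈ A)).Nonempty ∧
      (f \ U.filter (contractMap e' v0 · ∈ A)).Nonempty) :
    ((f.image (contractMap e' v0) ∩ A).Nonempty ∧ (f.image (contractMap e' v0) \ A).Nonempty) ∧
      f.image (contractMap e' v0) ⊆ U.image (contractMap e' v0) ∧ ¬ f ⊆ e' := by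
  obtain ⟨⟨u, hu⟩, ⟨w, hw⟩⟩ := hf
  simp only [Finset.mem_inter, Finset.mem_sdiff, Finset.mem_filter] at hu hw
  have hwA : contractMap e' v0 w ∉ A := fun h => hw.2 ⟨hfU hw.1, h⟩
  refine ⟨⟨⟨_, Finset.mem_inter.mpr ⟨Finset.mem_image_of_mem _ hu.1, hu.2.2⟩⟩,
    ⟨_, Finset.mem_sdiff.mpr ⟨Finset.mem_image_of_mem _ hw.1, hwA⟩⟩⟩,
    Finset.image_subset_image hfU, fun hfe' => hwA ?_⟩
  rw [contractMap_of_mem (hfe' hw.1), ← contractMap_of_mem (v0 := v0) (hfe' hu.1)]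
  exact hu.2.2

theorem card_cutEdges_preimage_le (A : Finset α) :
    Multiset.card (cutEdges (induced E U) (U.filter (contractMap e' v0 · ∈ A))) ≤
      Multiset.card
        (cutEdges (induced (contract E e' v0) (U.image (contractMap e' v0))) A) := by
  simp only [cutEdges, induced, contract, Multiset.filter_map, Multiset.card_map,
    Multiset.filter_filter, Function.comp_def]
  exact Multiset.card_le_card (Multiset.monotone_filter_right _
    fun _ hf => image_mem_cutEdges_contract hf.2 hf.1)

theorem lam_le_lam_contract (hU : (U.image (contractMap e' v0)).Nontrivial) :
    lam E U ≤ lam (contract E e' v0) (U.image (contractMap e' v0)) := by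
  refine le_lam hU fun A hAU hA hAU' => le_trans (lam_le_card_cutEdges ?_ ?_ ?_)
    (card_cutEdges_preimage_le A)
  · exact Finset.filter_subset _ _
  · obtain ⟨a, ha⟩ := hA
    obtain ⟨u, hu, rfl⟩ := Finset.mem_image.mp (hAU ha)
    exact ⟨u, Finset.mem_filter.mpr ⟨hu, ha⟩⟩
  · intro h
    refine hAU' (hAU.antisymm fun a ha => ?_)
    obtain ⟨u, hu, rfl⟩ := Finset.mem_image.mp ha
    rw [← h] at hu
    exact (Finset.mem_filter.mp hu).2

end Contraction

section Strength

variable {E : Multiset (Finset V)} {e : Finset V}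

theorem lam_le_strength {U : Finset V} (heU : e ⊆ U) : lam E U ≤ strength E e :=
  Finset.le_sup (Finset.mem_filter.mpr ⟨Finset.mem_powerset.mpr (Finset.subset_univ U), heU⟩)

theorem strength_le {k : ℕ} (h : ∀ U, e ⊆ U → lam E U ≤ k) : strength E e ≤ k :=
  Finset.sup_le fun U hU => h U (Finset.mem_filter.mp hU).2

end Strength

theorem strength_contract_ge_general (E : Multiset (Finset V)) (hE : ∀ e ∈ E, 2 ≤ e.card)
    (e' : Finset V) (v0 : V) (hv0 : v0 ∈ e')
    (e : Finset V) (he : e ∈ E) (hkeep : ¬ e ⊆ e') :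
    strength E e ≤ strength (contract E e' v0) (e.image (contractMap e' v0)) := by
  have he_image : (e.image (contractMap e' v0)).Nontrivial :=
    image_contractMap_nontrivial (hE e he) hv0 hkeep
  refine strength_le fun U heU => ?_
  calc lam E U ≤ lam (contract E e' v0) (U.image (contractMap e' v0)) :=
        lam_le_lam_contract (he_image.mono (Finset.image_subset_image heU))
    _ ≤ _ := lam_le_strength (Finset.image_subset_image heU)

/-- contracting an edge does not decrease the strength of any remaining
edge (one that is not removed by the contraction). -/
theorem strength_contract_ge (E : Multiset (Finset V)) (hE : ∀ e ∈ E, 2 ≤ e.card)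
    (e' : Finset V) (he' : e' ∈ E) (v0 : V) (hv0 : v0 ∈ e')
    (e : Finset V) (he : e ∈ E) (hne : e ≠ e') (hkeep : ¬ e ⊆ e') :
    strength E e ≤ strength (contract E e' v0) (e.image (contractMap e' v0)) :=
  strength_contract_ge_general E hE e' v0 hv0 e he hkeep
end

section
/- Let H = (V, E) be a connected hypergraph with |V| ≥ 2. Then the weighted hypergraph obtained by giving each edge e the weight ζ_H(e) = 1/γ_H(e) has minimum cut value exactly 1; that is, the minimum over nonempty proper subsets A ⊊ V of ∑_{e ∈ δ_H(A)} 1/γ_H(e) equals 1. -/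
/- A hypergraph on a finite vertex type `V` is given by a multiset `E` of edges,
each edge a `Finset V` (with at least 2 vertices, stated as a hypothesis). -/

variable {V : Type*} [Fintype V] [DecidableEq V]

/-! Let `k = λ(H)` be the edge-connectivity of `H`. Every edge has strength at least `k`
(take `U = V`), and an edge crossing a cut `A` has strength at most `|δ(A)|`, since `A ∩ U`
is a cut of `H[U]` crossed by no more edges than `A`. Hence each crossing edge costs at least
`1 / |δ(A)|`, so every cut has weight at least `1`, while on a minimum cut all crossing edges
have strength exactly `k` and the weight is `k / k = 1`. Connectivity makes `k ≥ 1`. -/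

namespace Multiset

variable {α : Type*} {s : Multiset α} {f : α → ℕ}

lemma one_le_sum_map_one_div_of_le_card (hs : s ≠ 0)
    (hf : ∀ x ∈ s, 0 < f x ∧ f x ≤ card s) :
    1 ≤ (s.map fun x => 1 / (f x : ℝ)).sum := by
  have hcard : (0 : ℝ) < card s := by exact_mod_cast card_pos.2 hs
  have hbound : ∀ y ∈ s.map fun x => 1 / (f x : ℝ), 1 / (card s : ℝ) ≤ y := by
    rintro _ hy
    obtain ⟨x, hx, rfl⟩ := mem_map.1 hy
    obtain ⟨hpos, hle⟩ := hf x hx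
    exact one_div_le_one_div_of_le (by exact_mod_cast hpos) (by exact_mod_cast hle)
  calc (1 : ℝ) = card s • (1 / (card s : ℝ)) := by
        rw [nsmul_eq_mul]; field_simp
    _ ≤ _ := by simpa only [card_map] using card_nsmul_le_sum hbound

lemma sum_map_one_div_eq_one_of_forall_eq_card (hs : s ≠ 0) (hf : ∀ x ∈ s, f x = card s) :
    (s.map fun x => 1 / (f x : ℝ)).sum = 1 := by
  have hcard : (card s : ℝ) ≠ 0 := by exact_mod_cast (card_pos.2 hs).ne'
  rw [map_congr rfl fun x hx => by rw [hf x hx], map_const', sum_replicate, nsmul_eq_mul]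
  field_simp

end Multiset

omit [Fintype V] in
lemma exists_mem_cutEdges_of_walk {E : Multiset (Finset V)} {A : Finset V} {a b : V}
    (w : (toGraph E).Walk a b) (ha : a ∈ A) (hb : b ∉ A) : ∃ e, e ∈ cutEdges E A := by
  induction w with
  | nil => exact absurd ha hb
  | @cons a c b hadj _ ih =>
    by_cases hc : c ∈ A
    · exact ih hc hb
    · obtain ⟨-, e, he, hae, hce⟩ := hadj
      exact ⟨e, Multiset.mem_filter.2 ⟨he, ⟨a, Finset.mem_inter.2 ⟨hae, ha⟩⟩,
        ⟨c, Finset.mem_sdiff.2 ⟨hce, hc⟩⟩⟩⟩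

lemma cutEdges_ne_zero {E : Multiset (Finset V)} (hconn : (toGraph E).Connected)
    {A : Finset V} (hA : A.Nonempty) (hA' : A ≠ Finset.univ) : cutEdges E A ≠ 0 := by
  obtain ⟨a, ha⟩ := hA
  obtain ⟨b, hb⟩ : ∃ b, b ∉ A := by
    simpa [Finset.eq_univ_iff_forall] using hA'
  exact Multiset.card_pos.1 <| Multiset.card_pos_iff_exists_mem.2 <|
    exists_mem_cutEdges_of_walk (hconn a b).some ha hb

lemma induced_univ (E : Multiset (Finset V)) : induced E Finset.univ = E :=
  Multiset.filter_eq_self.2 fun _ _ => Finset.subset_univ _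

lemma exists_card_cutEdges_eq_lam_univ (E : Multiset (Finset V)) (hn : 2 ≤ Fintype.card V) :
    ∃ A : Finset V, A.Nonempty ∧ A ≠ Finset.univ ∧
      Multiset.card (cutEdges E A) = lam E Finset.univ := by
  have : Nontrivial V := Fintype.one_lt_card_iff_nontrivial.1 hn
  obtain ⟨v, w, hvw⟩ := exists_pair_ne V
  have hcuts : {k : ℕ | ∃ A : Finset V, A ⊆ Finset.univ ∧ A.Nonempty ∧ A ≠ Finset.univ ∧
      k = Multiset.card (cutEdges (induced E Finset.univ) A)}.Nonempty :=
    ⟨_, {v}, Finset.subset_univ _, Finset.singleton_nonempty v,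
      fun h => hvw (Finset.mem_singleton.1 (h ▸ Finset.mem_univ w)).symm, rfl⟩
  obtain ⟨A, -, hA, hA', hcard⟩ := Nat.sInf_mem hcuts
  exact ⟨A, hA, hA', by rw [lam, hcard, induced_univ]⟩

lemma lam_univ_le_strength (E : Multiset (Finset V)) (e : Finset V) :
    lam E Finset.univ ≤ strength E e :=
  Finset.le_sup (by simp)

omit [Fintype V] in
lemma cutEdges_induced_inter_le (E : Multiset (Finset V)) (A U : Finset V) :
    cutEdges (induced E U) (A ∩ U) ≤ cutEdges E A := by
  unfold cutEdges induced
  rw [Multiset.filter_filter]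
  refine Multiset.monotone_filter_right _ ?_
  rintro f ⟨⟨⟨u, hu⟩, ⟨v, hv⟩⟩, hfU⟩
  simp only [Finset.mem_inter, Finset.mem_sdiff] at hu hv
  exact ⟨⟨u, Finset.mem_inter.2 ⟨hu.1, hu.2.1⟩⟩,
    ⟨v, Finset.mem_sdiff.2 ⟨hv.1, fun hvA => hv.2 ⟨hvA, hfU hv.1⟩⟩⟩⟩

lemma strength_le_card_cutEdges (E : Multiset (Finset V)) {e A : Finset V}
    (he : e ∈ cutEdges E A) : strength E e ≤ Multiset.card (cutEdges E A) := by
  obtain ⟨-, ⟨x, hx⟩, ⟨y, hy⟩⟩ := Multiset.mem_filter.1 he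
  rw [Finset.mem_inter] at hx
  rw [Finset.mem_sdiff] at hy
  refine Finset.sup_le fun U hU => ?_
  have heU : e ⊆ U := (Finset.mem_filter.1 hU).2
  have hcut : A ∩ U ≠ U := fun h => hy.2 (Finset.mem_inter.1 (h ▸ heU hy.1)).1
  calc lam E U ≤ Multiset.card (cutEdges (induced E U) (A ∩ U)) :=
        Nat.sInf_le ⟨A ∩ U, Finset.inter_subset_right,
          ⟨x, Finset.mem_inter.2 ⟨hx.2, heU hx.1⟩⟩, hcut, rfl⟩
    _ ≤ Multiset.card (cutEdges E A) :=
        Multiset.card_le_card (cutEdges_induced_inter_le E A U)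

theorem cost_weighted_mincut_eq_one_general (E : Multiset (Finset V))
    (hconn : (toGraph E).Connected)
    (hn : 2 ≤ Fintype.card V) :
    (∀ A : Finset V, A.Nonempty → A ≠ Finset.univ →
      1 ≤ ((cutEdges E A).map (fun e => (1 : ℝ) / (strength E e : ℝ))).sum) ∧
    (∃ A : Finset V, A.Nonempty ∧ A ≠ Finset.univ ∧
      ((cutEdges E A).map (fun e => (1 : ℝ) / (strength E e : ℝ))).sum = 1) := by
  obtain ⟨A₀, hA₀, hA₀', hmin⟩ := exists_card_cutEdges_eq_lam_univ E hn
  have hstrength_pos (e : Finset V) : 0 < strength E e :=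
    (hmin ▸ Multiset.card_pos.2 (cutEdges_ne_zero hconn hA₀ hA₀')).trans_le
      (lam_univ_le_strength E e)
  refine ⟨fun A hA hA' => ?_, A₀, hA₀, hA₀', ?_⟩
  · exact Multiset.one_le_sum_map_one_div_of_le_card (cutEdges_ne_zero hconn hA hA')
      fun e he => ⟨hstrength_pos e, strength_le_card_cutEdges E he⟩
  · exact Multiset.sum_map_one_div_eq_one_of_forall_eq_card (cutEdges_ne_zero hconn hA₀ hA₀')
      fun e he => (strength_le_card_cutEdges E he).antisymm
        (hmin ▸ lam_univ_le_strength E e)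

/-- in a connected hypergraph with at least 2 vertices, weighting each
edge `e` by `ζ_H(e) = 1/γ_H(e)` yields a hypergraph whose minimum cut value is
exactly `1`: every nonempty proper cut has weight at least `1`, and some such cut has
weight exactly `1`. -/
theorem cost_weighted_mincut_eq_one (E : Multiset (Finset V))
    (hE : ∀ e ∈ E, 2 ≤ e.card) (hconn : (toGraph E).Connected)
    (hn : 2 ≤ Fintype.card V) :
    (∀ A : Finset V, A.Nonempty → A ≠ Finset.univ →
      1 ≤ ((cutEdges E A).map (fun e => (1 : ℝ) / (strength E e : ℝ))).sum) ∧
    (∃ A : Finset V, A.Nonempty ∧ A ≠ Finset.univ ∧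
      ((cutEdges E A).map (fun e => (1 : ℝ) / (strength E e : ℝ))).sum = 1) :=
  cost_weighted_mincut_eq_one_general E hconn hn
end

section
/- For every hypergraph H = (V, E) and every positive integer k, there exists a subset E' ⊆ E that is a k-partition of H (E' contains every k-crisp edge of H) and is 2k-light, i.e., |E'| ≤ 2k·(κ(H − E') − κ(H)). -/
/-!
If some edge is `k`-crisp, it crosses a cut `δ(A)` with fewer than `k` edges. Deleting
`δ(A)` separates the two ends of that edge, so `κ` grows by at least one and `δ(A)` is
`k`-light. Every `k`-crisp edge of `H` outside `δ(A)` is still `k`-crisp in `H − δ(A)`,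
since cuts only shrink, so recursing on `H − δ(A)` and adding `δ(A)` back gives a `k`-light,
hence `2k`-light, `k`-partition; lightness adds up because the `κ`-increments telescope.
-/

/- A hypergraph on a finite vertex type `V` is given by a multiset `E` of edges,
each edge a `Finset V` (with at least 2 vertices, stated as a hypothesis). -/

variable {V : Type*} [Fintype V] [DecidableEq V]

/-- An edge `e` of `H` is `k`-crisp if it crosses a cut of value less than `k`. -/
def IsKCrisp (E : Multiset (Finset V)) (k : ℕ) (e : Finset V) : Prop :=
  e ∈ E ∧ ∃ A : Finset V, A.Nonempty ∧ A ≠ Finset.univ ∧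
    (e ∩ A).Nonempty ∧ (e \ A).Nonempty ∧ Multiset.card (cutEdges E A) < k

def IsKPartition (E E' : Multiset (Finset V)) (k : ℕ) : Prop :=
  ∀ e : Finset V, IsKCrisp E k e → E.count e ≤ E'.count e

def IsLight (E E' : Multiset (Finset V)) (ℓ : ℕ) : Prop :=
  Multiset.card E' ≤ ℓ * (kappa (E - E') - kappa E)

omit [Fintype V] [DecidableEq V] in
lemma toGraph_mono {E₁ E₂ : Multiset (Finset V)} (h : E₁ ≤ E₂) : toGraph E₁ ≤ toGraph E₂ := by
  rintro u v ⟨hne, e, he, hu, hv⟩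
  exact ⟨hne, e, Multiset.mem_of_le h he, hu, hv⟩

omit [DecidableEq V] in
lemma kappa_anti {E₁ E₂ : Multiset (Finset V)} (h : E₁ ≤ E₂) : kappa E₂ ≤ kappa E₁ :=
  SimpleGraph.ConnectedComponent.card_le_card_of_le (toGraph_mono h)

omit [Fintype V] in
lemma mem_iff_mem_of_reachable {E : Multiset (Finset V)} {A : Finset V}
    (hA : cutEdges E A = 0) {u v : V} (h : (toGraph E).Reachable u v) : u ∈ A ↔ v ∈ A := by
  replace h := (SimpleGraph.reachable_iff_reflTransGen u v).1 h
  induction h with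
  | refl => rfl
  | tail _ hadj ih =>
    obtain ⟨-, f, hf, ha, hb⟩ := hadj
    have hf_uncut := Multiset.filter_eq_nil.1 hA f hf
    simp only [Finset.Nonempty, Finset.mem_inter, Finset.mem_sdiff, not_and, not_exists] at hf_uncut
    exact ih.trans ⟨fun haA => of_not_not (hf_uncut ⟨_, ha, haA⟩ _ hb),
      fun hbA => of_not_not (hf_uncut ⟨_, hb, hbA⟩ _ ha)⟩

omit [Fintype V] in
lemma cutEdges_sub_cutEdges (E : Multiset (Finset V)) (A : Finset V) :
    cutEdges (E - cutEdges E A) A = 0 := by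
  rw [cutEdges, cutEdges, Multiset.sub_filter_eq_filter_not, Multiset.filter_filter]
  exact Multiset.filter_eq_nil.2 fun _ _ h => h.2 h.1

lemma kappa_lt_kappa_sub_cutEdges {E : Multiset (Finset V)} {A e : Finset V} (he : e ∈ E)
    (hin : (e ∩ A).Nonempty) (hout : (e \ A).Nonempty) :
    kappa E < kappa (E - cutEdges E A) := by
  obtain ⟨u, hu⟩ := hin
  obtain ⟨v, hv⟩ := hout
  rw [Finset.mem_inter] at hu
  rw [Finset.mem_sdiff] at hv
  have hle : toGraph (E - cutEdges E A) ≤ toGraph E := toGraph_mono tsub_le_self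
  have huv : (toGraph E).connectedComponentMk u = (toGraph E).connectedComponentMk v :=
    SimpleGraph.ConnectedComponent.eq.2
      (SimpleGraph.Adj.reachable ⟨fun h => hv.2 (h ▸ hu.2), e, he, hu.1, hv.1⟩)
  by_contra! hcard
  have hinj := ((SimpleGraph.ConnectedComponent.surjective_map_ofLE hle).bijective_of_nat_card_le
    hcard).injective
  have hreach := SimpleGraph.ConnectedComponent.eq.1 (hinj huv)
  exact hv.2 ((mem_iff_mem_of_reachable (cutEdges_sub_cutEdges E A) hreach).1 hu.2)

lemma IsKCrisp.of_le {E₁ E : Multiset (Finset V)} {k : ℕ} {f : Finset V} (h : IsKCrisp E k f)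
    (hle : E₁ ≤ E) (hf : f ∈ E₁) : IsKCrisp E₁ k f := by
  obtain ⟨-, A, hA, hAuniv, hin, hout, hcut⟩ := h
  refine ⟨hf, A, hA, hAuniv, hin, hout, lt_of_le_of_lt ?_ hcut⟩
  exact Multiset.card_le_card (Multiset.filter_le_filter _ hle)

lemma IsKPartition.add_of_sub {E C E' : Multiset (Finset V)} {k : ℕ} (hC : C ≤ E)
    (h : IsKPartition (E - C) E' k) : IsKPartition E (C + E') k := by
  intro f hf
  have hcount : E.count f = C.count f + (E - C).count f := by
    rw [← Multiset.count_add, add_tsub_cancel_of_le hC]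
  have hrest : (E - C).count f ≤ E'.count f := by
    by_cases hfrest : f ∈ E - C
    · exact h f (hf.of_le tsub_le_self hfrest)
    · simp [Multiset.count_eq_zero_of_notMem hfrest]
  rw [Multiset.count_add]
  omega

lemma IsLight.add_of_sub {E C E' : Multiset (Finset V)} {ℓ : ℕ}
    (hC : IsLight E C ℓ) (h : IsLight (E - C) E' ℓ) : IsLight E (C + E') ℓ := by
  have hmono₁ : kappa E ≤ kappa (E - C) := kappa_anti tsub_le_self
  have hmono₂ : kappa (E - C) ≤ kappa (E - C - E') := kappa_anti tsub_le_self
  unfold IsLight at hC h ⊢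
  rw [Multiset.card_add, tsub_add_eq_tsub_tsub]
  calc Multiset.card C + Multiset.card E'
      ≤ ℓ * (kappa (E - C) - kappa E) + ℓ * (kappa (E - C - E') - kappa (E - C)) :=
        add_le_add hC h
    _ = ℓ * (kappa (E - C - E') - kappa E) := by rw [← mul_add]; congr 1; omega

omit [Fintype V] in
lemma IsLight.mono {E E' : Multiset (Finset V)} {ℓ ℓ' : ℕ} (h : IsLight E E' ℓ)
    (hℓ : ℓ ≤ ℓ') : IsLight E E' ℓ' :=
  h.trans (Nat.mul_le_mul_right _ hℓ)

lemma isLight_cutEdges {E : Multiset (Finset V)} {A e : Finset V} {ℓ : ℕ} (he : e ∈ E)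
    (hin : (e ∩ A).Nonempty) (hout : (e \ A).Nonempty)
    (hcut : Multiset.card (cutEdges E A) ≤ ℓ) : IsLight E (cutEdges E A) ℓ := by
  have := kappa_lt_kappa_sub_cutEdges he hin hout
  exact hcut.trans (Nat.le_mul_of_pos_right ℓ (by omega))

theorem exists_kLight_kPartition (E : Multiset (Finset V)) (k : ℕ) :
    ∃ E' ≤ E, IsKPartition E E' k ∧ IsLight E E' k := by
  by_cases hcrisp : ∃ e, IsKCrisp E k e
  · obtain ⟨e, he, A, -, -, hin, hout, hcut⟩ := hcrisp
    have hcutE : cutEdges E A ≤ E := Multiset.filter_le _ _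
    have hcut_pos : 0 < Multiset.card (cutEdges E A) :=
      Multiset.card_pos_iff_exists_mem.2 ⟨e, Multiset.mem_filter.2 ⟨he, hin, hout⟩⟩
    have hdecreasing : Multiset.card (E - cutEdges E A) < Multiset.card E := by
      rw [Multiset.card_sub hcutE]
      have := Multiset.card_le_card hcutE
      omega
    obtain ⟨E', hE', hpart, hlight⟩ := exists_kLight_kPartition (E - cutEdges E A) k
    refine ⟨cutEdges E A + E', ?_, hpart.add_of_sub hcutE, ?_⟩
    · calc cutEdges E A + E' ≤ cutEdges E A + (E - cutEdges E A) := add_le_add_right hE' _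
        _ = E := add_tsub_cancel_of_le hcutE
    · exact (isLight_cutEdges he hin hout hcut.le).add_of_sub hlight
  · exact ⟨0, Multiset.zero_le E, fun e he => absurd ⟨e, he⟩ hcrisp, by simp [IsLight]⟩
termination_by Multiset.card E

theorem light_partition_exists_general (E : Multiset (Finset V)) (k : ℕ) :
    ∃ E' : Multiset (Finset V), E' ≤ E ∧
      (∀ e : Finset V, IsKCrisp E k e → E.count e ≤ E'.count e) ∧
      Multiset.card E' ≤ 2 * k * (kappa (E - E') - kappa E) := by
  obtain ⟨E', hE', hpart, hlight⟩ := exists_kLight_kPartition E k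
  exact ⟨E', hE', hpart, hlight.mono (by omega)⟩

/-- every hypergraph has a `2k`-light `k`-partition: a subset `E' ⊆ E`
containing (all copies of) every `k`-crisp edge with
`|E'| ≤ 2k·(κ(H − E') − κ(H))`. -/
theorem light_partition_exists (E : Multiset (Finset V))
    (hE : ∀ e ∈ E, 2 ≤ e.card) (k : ℕ) (hk : 0 < k) :
    ∃ E' : Multiset (Finset V), E' ≤ E ∧
      (∀ e : Finset V, IsKCrisp E k e → E.count e ≤ E'.count e) ∧
      Multiset.card E' ≤ 2 * k * (kappa (E - E') - kappa E) :=
  light_partition_exists_general E k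
end
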